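/- With notation as before (P_t = ℙ(V₁(t) ∧ V₄(t)), V₁(t) = span{e₀ + t e₁ − t² e₄}, V₄(t) = span{e₀, e₁, e₂ + t e₃, e₄}), for t ≠ t' in ℂ the intersection P_t ∩ P_{t'} is a single point, and this point lies in S = ℙ(Λ² span{e₀, e₁, e₄}). -/
import Mathlib


/-- A concrete model of `Λ²ℂ⁵` inside 5×5 matrices: `v ∧ w` corresponds to the
skew-symmetric matrix with entries `vᵢwⱼ − vⱼwᵢ`. -/
def wedge (v w : Fin 5 → ℂ) : Matrix (Fin 5) (Fin 5) ℂ :=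
  fun i j => v i * w j - v j * w i

/-- `V₁(t) = span{e₀ + t e₁ − t² e₄}`: its generating vector. -/
def v1 (t : ℂ) : Fin 5 → ℂ := ![1, t, 0, 0, -t ^ 2]

/-- `V₄(t) = span{e₀, e₁, e₂ + t e₃, e₄}`. -/
noncomputable def V4 (t : ℂ) : Submodule ℂ (Fin 5 → ℂ) :=
  Submodule.span ℂ {![1,0,0,0,0], ![0,1,0,0,0], ![0,0,1,t,0], ![0,0,0,0,1]}

/-- The linear subspace underlying the σ₃,₁-type plane
`P_t = ℙ(V₁(t) ∧ V₄(t)) ⊂ ℙ(Λ²ℂ⁵)`. -/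
noncomputable def Pt (t : ℂ) : Submodule ℂ (Matrix (Fin 5) (Fin 5) ℂ) :=
  Submodule.span ℂ {M | ∃ w ∈ V4 t, M = wedge (v1 t) w}

/-- The linear subspace underlying the σ₂,₂-type plane `S = ℙ(Λ² span{e₀,e₁,e₄})`. -/
noncomputable def Splane : Submodule ℂ (Matrix (Fin 5) (Fin 5) ℂ) :=
  Submodule.span ℂ {M | ∃ v ∈ Submodule.span ℂ {![1,0,0,0,0], ![0,1,0,0,0], ![0,0,0,0,1]},
    ∃ w ∈ Submodule.span ℂ ({![1,0,0,0,0], ![0,1,0,0,0], ![0,0,0,0,1]} :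
      Set (Fin 5 → ℂ)), M = wedge v w}

lemma wedge_add (v w w' : Fin 5 → ℂ) : wedge v (w + w') = wedge v w + wedge v w' := by
  funext i j; simp [wedge]; ring

lemma wedge_smul (v w : Fin 5 → ℂ) (c : ℂ) : wedge v (c • w) = c • wedge v w := by
  funext i j; simp [wedge, Matrix.smul_apply]; ring

lemma wedge_zero (v : Fin 5 → ℂ) : wedge v 0 = 0 := by
  funext i j; simp [wedge]

lemma mem_V4_iff (t : ℂ) (w : Fin 5 → ℂ) : w ∈ V4 t ↔ w 3 = t * w 2 := by
  constructor
  · intro hw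
    induction hw using Submodule.span_induction with
    | mem x hx =>
      rcases hx with h | h | h | h <;> subst h <;> simp
    | zero => simp
    | add x y _ _ hx hy => simp [hx, hy]; ring
    | smul c x _ hx => simp [hx]; ring
  · intro hw
    have hrepr : w = w 0 • ![1,0,0,0,0] + w 1 • ![0,1,0,0,0] + w 2 • ![0,0,1,t,0]
        + w 4 • ![0,0,0,0,1] := by
      funext i
      fin_cases i <;> simp [hw] <;> ring
    rw [hrepr]
    refine Submodule.add_mem _ (Submodule.add_mem _ (Submodule.add_mem _ ?_ ?_) ?_) ?_ <;>
      exact Submodule.smul_mem _ _ (Submodule.subset_span (by simp))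

lemma mem_Pt_iff (t : ℂ) (x : Matrix (Fin 5) (Fin 5) ℂ) :
    x ∈ Pt t ↔ ∃ w ∈ V4 t, x = wedge (v1 t) w := by
  constructor
  · intro hx
    induction hx using Submodule.span_induction with
    | mem x hx => exact hx
    | zero => exact ⟨0, Submodule.zero_mem _, (wedge_zero _).symm⟩
    | add x y _ _ hx hy =>
      obtain ⟨w, hw, rfl⟩ := hx
      obtain ⟨w', hw', rfl⟩ := hy
      exact ⟨w + w', Submodule.add_mem _ hw hw', (wedge_add _ _ _).symm⟩
    | smul c x _ hx =>
      obtain ⟨w, hw, rfl⟩ := hx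
      exact ⟨c • w, Submodule.smul_mem _ _ hw, (wedge_smul _ _ _).symm⟩
  · intro ⟨w, hw, hx⟩
    exact Submodule.subset_span ⟨w, hw, hx⟩

lemma v1_mem_span (t : ℂ) :
    v1 t ∈ Submodule.span ℂ ({![1,0,0,0,0], ![0,1,0,0,0], ![0,0,0,0,1]} :
      Set (Fin 5 → ℂ)) := by
  have hrepr : v1 t = (1:ℂ) • ![1,0,0,0,0] + t • ![0,1,0,0,0] + (-t^2) • ![0,0,0,0,1] := by
    funext i; fin_cases i <;> simp [v1]
  rw [hrepr]
  refine Submodule.add_mem _ (Submodule.add_mem _ ?_ ?_) ?_ <;>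
    exact Submodule.smul_mem _ _ (Submodule.subset_span (by simp))

lemma inter_eq (t t' : ℂ) (htt' : t ≠ t') :
    Pt t ⊓ Pt t' = Submodule.span ℂ {wedge (v1 t) (v1 t')} := by
  have hne : t' - t ≠ 0 := sub_ne_zero.mpr (Ne.symm htt')
  apply le_antisymm
  · rintro x ⟨hx1, hx2⟩
    obtain ⟨w, hw, rfl⟩ := (mem_Pt_iff t x).mp hx1
    obtain ⟨w', hw', heq⟩ := (mem_Pt_iff t' _).mp hx2
    rw [mem_V4_iff] at hw hw'
    have E : ∀ i j, wedge (v1 t) w i j = wedge (v1 t') w' i j :=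
      fun i j => congrFun (congrFun heq i) j
    have e02 := E 0 2
    have e12 := E 1 2
    simp [wedge, v1] at e02 e12
    have hw2 : w 2 = 0 := by
      have h0 : (t - t') * w 2 = 0 := by linear_combination e12 - t' * e02
      rcases mul_eq_zero.mp h0 with h | h
      · exact absurd (sub_eq_zero.mp h) htt'
      · exact h
    have hw'2 : w' 2 = 0 := by linear_combination hw2 - e02
    have hw3 : w 3 = 0 := by rw [hw, hw2, mul_zero]
    have e01 := E 0 1
    have e04 := E 0 4
    have e14 := E 1 4
    simp [wedge, v1] at e01 e04 e14
    have hkey : w 4 = t * t' * w 0 - (t + t') * w 1 := by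
      have h0 : (t' - t) * (w 4 - t * t' * w 0 + (t + t') * w 1) = 0 := by
        linear_combination t' * e04 + t' ^ 2 * e01 - e14
      rcases mul_eq_zero.mp h0 with h | h
      · exact absurd h hne
      · linear_combination h
    apply Submodule.mem_span_singleton.mpr
    refine ⟨(w 1 - t * w 0) / (t' - t), ?_⟩
    funext i j
    fin_cases i <;> fin_cases j <;>
      simp [wedge, v1, hw2, hw3, hkey, Matrix.smul_apply] <;>
      field_simp <;> ring
  · rw [Submodule.span_le, Set.singleton_subset_iff]
    constructor
    · exact (mem_Pt_iff t _).mpr ⟨v1 t', by rw [mem_V4_iff]; simp [v1], rfl⟩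
    · have h1 : wedge (v1 t') (v1 t) ∈ Pt t' :=
        (mem_Pt_iff t' _).mpr ⟨v1 t, by rw [mem_V4_iff]; simp [v1], rfl⟩
      have h2 : wedge (v1 t) (v1 t') = -(wedge (v1 t') (v1 t)) := by
        funext i j; simp [wedge]; ring
      rw [h2]
      exact Submodule.neg_mem _ h1

/-- For `t ≠ t'`, the planes `P_t` and `P_{t'}` meet in a single point which lies in `S`:
the corresponding linear subspaces of `Λ²ℂ⁵` intersect in a 1-dimensional subspace
contained in the subspace underlying `S`. -/
theorem Pt_inter_Pt'_is_point_in_S :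
    ∀ t t' : ℂ, t ≠ t' →
      Module.finrank ℂ ↥(Pt t ⊓ Pt t') = 1 ∧ Pt t ⊓ Pt t' ≤ Splane := by
  intro t t' htt'
  rw [inter_eq t t' htt']
  constructor
  · apply finrank_span_singleton
    intro h
    have h01 := congrFun (congrFun h 0) 1
    simp [wedge, v1] at h01
    exact htt' (by linear_combination -h01)
  · rw [Submodule.span_le, Set.singleton_subset_iff]
    exact Submodule.subset_span ⟨v1 t, v1_mem_span t, v1 t', v1_mem_span t', rfl⟩
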